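/- arXiv:cs/0703077 — 5 statements merged into one kernel-verified Lean document; each statement's English description precedes it below -/
import Mathlib

section
/- Error-form absorption: let l(x) = [a⁻,a⁺] + Σ_v [a_v⁻,a_v⁺]·x_v be an interval linear form and define ε(l)(x) = max(|a⁻|,|a⁺|)·[−2^{−p},2^{−p}] + Σ_v max(|a_v⁻|,|a_v⁺|)·[−2^{−p},2^{−p}]·x_v. Then for any point x and any r in the evaluation of l at x, the number r·s for any s ∈ [−2^{−p}, 2^{−p}] lies in the evaluation of ε(l) at x. -/
open Finset in
def evalLF {V : Type*} [Fintype V] (am ap : ℝ) (lo hi : V → ℝ) (x : V → ℝ) : Set ℝ :=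
  {r | ∃ c ∈ Set.Icc am ap, ∃ t : V → ℝ,
    (∀ v, t v ∈ Set.Icc (lo v) (hi v)) ∧ r = c + ∑ v, t v * x v}

lemma abs_le_max_of_mem_Icc {a b c : ℝ} (h : c ∈ Set.Icc a b) : |c| ≤ max |a| |b| := by
  rcases h with ⟨h1, h2⟩
  rw [abs_le]
  constructor
  · calc -(max |a| |b|) ≤ -|a| := by simp
      _ ≤ a := neg_abs_le a
      _ ≤ c := h1
  · calc c ≤ b := h2
      _ ≤ |b| := le_abs_self b
      _ ≤ max |a| |b| := le_max_right _ _

theorem error_form_absorption {V : Type*} [Fintype V]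
    (p : ℕ) (hp : 1 ≤ p) (am ap : ℝ) (lo hi : V → ℝ) (x : V → ℝ) (r s : ℝ)
    (hr : r ∈ evalLF am ap lo hi x)
    (hs : s ∈ Set.Icc (-(2 : ℝ) ^ (-(p : ℤ))) ((2 : ℝ) ^ (-(p : ℤ)))) :
    r * s ∈ evalLF
      (-((2 : ℝ) ^ (-(p : ℤ)) * max |am| |ap|)) ((2 : ℝ) ^ (-(p : ℤ)) * max |am| |ap|)
      (fun v => -((2 : ℝ) ^ (-(p : ℤ)) * max |lo v| |hi v|))
      (fun v => (2 : ℝ) ^ (-(p : ℤ)) * max |lo v| |hi v|) x := by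
  obtain ⟨c, hc, t, ht, hrval⟩ := hr
  have hsabs : |s| ≤ (2 : ℝ) ^ (-(p : ℤ)) := abs_le.mpr ⟨hs.1, hs.2⟩
  have key : ∀ (a b u : ℝ), u ∈ Set.Icc a b →
      u * s ∈ Set.Icc (-((2 : ℝ) ^ (-(p : ℤ)) * max |a| |b|))
        ((2 : ℝ) ^ (-(p : ℤ)) * max |a| |b|) := by
    intro a b u hu
    have : |u * s| ≤ (2 : ℝ) ^ (-(p : ℤ)) * max |a| |b| := by
      rw [abs_mul]
      calc |u| * |s| ≤ max |a| |b| * (2 : ℝ) ^ (-(p : ℤ)) :=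
            mul_le_mul (abs_le_max_of_mem_Icc hu) hsabs (abs_nonneg _)
              (le_trans (abs_nonneg _) (abs_le_max_of_mem_Icc hu))
        _ = (2 : ℝ) ^ (-(p : ℤ)) * max |a| |b| := mul_comm _ _
    exact ⟨(abs_le.mp this).1, (abs_le.mp this).2⟩
  refine ⟨c * s, key am ap c hc, fun v => t v * s, fun v => key _ _ _ (ht v), ?_⟩
  rw [hrval, add_mul, Finset.sum_mul]
  congr 1
  apply Finset.sum_congr rfl
  intro v _
  ring
end

section
/- Soundness of the octagon upper-bound operator on interval linear forms: suppose for each variable v we have bounds x_v ≤ M_v and −x_v ≤ m_v (all finite reals). Then for any r in the evaluation at x of the interval linear form [a⁻,a⁺] + Σ_v [a_v⁻,a_v⁺]·x_v, we have r ≤ a⁺ + Σ_v max(M_v·a_v⁺, (−m_v)·a_v⁺, M_v·a_v⁻, (−m_v)·a_v⁻). -/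
lemma corner_bound {t x lo hi mm M : ℝ} (h1 : lo ≤ t) (h2 : t ≤ hi)
    (h3 : -mm ≤ x) (h4 : x ≤ M) :
    t * x ≤ max (max (M * hi) ((-mm) * hi)) (max (M * lo) ((-mm) * lo)) := by
  have key : t*x ≤ M*hi ∨ t*x ≤ (-mm)*hi ∨ t*x ≤ M*lo ∨ t*x ≤ (-mm)*lo := by
    rcases le_total 0 t with ht | ht
    · rcases le_total 0 M with hM | hM
      · left
        nlinarith [mul_nonneg ht (sub_nonneg.mpr h4), mul_nonneg hM (sub_nonneg.mpr h2)]
      · right; right; left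
        nlinarith [mul_nonneg ht (sub_nonneg.mpr h4),
          mul_nonneg (neg_nonneg.mpr hM) (sub_nonneg.mpr h1)]
    · rcases le_total mm 0 with hm | hm
      · right; left
        nlinarith [mul_nonneg (neg_nonneg.mpr ht) (by linarith : (0:ℝ) ≤ x + mm),
          mul_nonneg (neg_nonneg.mpr hm) (sub_nonneg.mpr h2)]
      · right; right; right
        nlinarith [mul_nonneg (neg_nonneg.mpr ht) (by linarith : (0:ℝ) ≤ x + mm),
          mul_nonneg hm (sub_nonneg.mpr h1)]
  simp only [le_max_iff]
  tauto

open Finset in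
theorem octagon_upper_bound_sound {V : Type*} [Fintype V]
    (am ap : ℝ) (lo hi M m : V → ℝ) (x : V → ℝ) (r : ℝ)
    (hub : ∀ v, x v ≤ M v) (hlb : ∀ v, -x v ≤ m v)
    (hr : r ∈ evalLF am ap lo hi x) :
    r ≤ ap + ∑ v, max (max (M v * hi v) ((-m v) * hi v))
                      (max (M v * lo v) ((-m v) * lo v)) := by
  obtain ⟨c, hc, t, ht, rfl⟩ := hr
  gcongr
  · exact hc.2
  · rename_i v _
    exact corner_bound (ht v).1 (ht v).2 (neg_le_of_neg_le (hlb v)) (hub v)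
end

section
/- Soundness of absolute-error symmetrization of an interval linear form: let l(x) = [a⁻,a⁺] + Σ_v [a_v⁻,a_v⁺]·x_v and suppose x_v ∈ J_v for each v where J_v is a closed bounded interval. Define c_v = (a_v⁻ + a_v⁺)/2 and the new constant interval I' = [a⁻,a⁺] + Σ_v ((a_v⁺ − a_v⁻)/2)·[−s_v, s_v] where s_v = max(|inf J_v|, |sup J_v|). Then every r in the evaluation of l at x also lies in the evaluation of l'(x) = I' + Σ_v c_v·x_v at x. -/
/-! Write `t_v * x_v = c_v * x_v + (t_v - c_v) * x_v`. With `c_v` the midpoint of the coefficient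
interval, `|t_v - c_v| ≤ (a_v⁺ - a_v⁻) / 2`, and `|x_v| ≤ s_v` since `x_v ∈ J_v`; so each error term
lies in `((a_v⁺ - a_v⁻) / 2) • [-s_v, s_v]` and can be moved into the constant interval. -/

open Pointwise

open Finset in
def evalS {V : Type*} [Fintype V] (I : Set ℝ) (C : V → Set ℝ) (x : V → ℝ) : Set ℝ :=
  {r | ∃ c ∈ I, ∃ t : V → ℝ, (∀ v, t v ∈ C v) ∧ r = c + ∑ v, t v * x v}

lemma mem_smul_Icc_neg_of_abs_le {a s d : ℝ} (ha : 0 ≤ a) (hs : 0 ≤ s) (h : |d| ≤ a * s) :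
    d ∈ a • Set.Icc (-s) s := by
  rcases ha.eq_or_lt with rfl | ha
  · rw [Set.zero_smul_set (Set.nonempty_Icc.mpr (neg_le_self hs)), Set.mem_zero, ← abs_nonpos_iff]
    simpa using h
  · rw [LinearOrderedField.smul_Icc ha, mul_neg]
    exact abs_le.mp h

lemma abs_sub_midpoint_le {t lo hi : ℝ} (ht : t ∈ Set.Icc lo hi) :
    |t - (lo + hi) / 2| ≤ (hi - lo) / 2 := by
  rw [abs_le]
  constructor <;> linarith [ht.1, ht.2]

lemma sub_midpoint_mul_mem_smul_Icc {t lo hi y ylo yhi : ℝ} (ht : t ∈ Set.Icc lo hi)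
    (hy : y ∈ Set.Icc ylo yhi) :
    (t - (lo + hi) / 2) * y ∈
      ((hi - lo) / 2) • Set.Icc (-(max |ylo| |yhi|)) (max |ylo| |yhi|) := by
  have hlo_hi : lo ≤ hi := ht.1.trans ht.2
  refine mem_smul_Icc_neg_of_abs_le (by linarith) (le_max_of_le_left (abs_nonneg _)) ?_
  rw [abs_mul]
  exact mul_le_mul (abs_sub_midpoint_le ht) (abs_le_max_abs_abs hy.1 hy.2) (abs_nonneg _)
    (by linarith)

lemma evalS_subset_evalS_add_sum {V : Type*} [Fintype V] (I : Set ℝ) (C D : V → Set ℝ)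
    (c x : V → ℝ) (h : ∀ v, ∀ t ∈ C v, (t - c v) * x v ∈ D v) :
    evalS I C x ⊆ evalS (I + ∑ v, D v) (fun v => Set.Icc (c v) (c v)) x := by
  rintro _ ⟨a, ha, t, ht, rfl⟩
  refine ⟨a + ∑ v, (t v - c v) * x v,
    Set.add_mem_add ha ((Set.mem_fintype_sum _ _).mpr ⟨_, fun v => h v _ (ht v), rfl⟩),
    c, fun v => Set.left_mem_Icc.mpr le_rfl, ?_⟩
  rw [add_assoc, ← Finset.sum_add_distrib]
  exact congrArg _ (Finset.sum_congr rfl fun v _ => by ring)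

open Finset in
theorem symmetrization_sound {V : Type*} [Fintype V]
    (am ap : ℝ) (lo hi jlo jhi : V → ℝ) (x : V → ℝ) (r : ℝ)
    (hx : ∀ v, x v ∈ Set.Icc (jlo v) (jhi v))
    (hr : r ∈ evalS (Set.Icc am ap) (fun v => Set.Icc (lo v) (hi v)) x) :
    r ∈ evalS
      (Set.Icc am ap +
        ∑ v, ((hi v - lo v) / 2) •
          Set.Icc (-(max |jlo v| |jhi v|)) (max |jlo v| |jhi v|))
      (fun v => Set.Icc ((lo v + hi v) / 2) ((lo v + hi v) / 2)) x :=
  evalS_subset_evalS_add_sum _ _ _ _ x (fun v _ ht => sub_midpoint_mul_mem_smul_Icc ht (hx v)) hr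
end

section
/- Linearization soundness for addition (real-arithmetic core): suppose the real r₁ lies in the evaluation of interval linear form l₁ at x, r₂ lies in the evaluation of l₂ at x, and the rounding of r₁ + r₂ satisfies |R(r₁+r₂) − (r₁+r₂)| ≤ 2^{−p}(|r₁| + |r₂|) + mf. If additionally every element of the evaluation of l₁ at x has absolute value bounded so that |r₁| ∈ ε-absorption (i.e. 2^{−p}·r₁ lies in the evaluation of ε(l₁) at x and similarly for r₂), then R(r₁+r₂) lies in the evaluation of l₁ ⊞ l₂ ⊞ ε(l₁) ⊞ ε(l₂) ⊞ mf·[−1,1] at x. -/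
theorem linearization_add_sound {V : Type*} [Fintype V]
    (p : ℕ) (hp : 1 ≤ p) (mf : ℝ) (hmf : 0 < mf)
    (am1 ap1 am2 ap2 : ℝ) (lo1 hi1 lo2 hi2 : V → ℝ) (x : V → ℝ)
    (R : ℝ → ℝ) (r1 r2 : ℝ)
    (hr1 : r1 ∈ evalLF am1 ap1 lo1 hi1 x)
    (hr2 : r2 ∈ evalLF am2 ap2 lo2 hi2 x)
    (hR : |R (r1 + r2) - (r1 + r2)| ≤ (2 : ℝ) ^ (-(p : ℤ)) * (|r1| + |r2|) + mf)
    -- ε-absorption hypotheses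
    (habs1 : ∀ s : ℝ, |s| ≤ (2 : ℝ) ^ (-(p : ℤ)) →
      s * r1 ∈ evalLF (-((2 : ℝ) ^ (-(p : ℤ)) * max |am1| |ap1|))
        ((2 : ℝ) ^ (-(p : ℤ)) * max |am1| |ap1|)
        (fun v => -((2 : ℝ) ^ (-(p : ℤ)) * max |lo1 v| |hi1 v|))
        (fun v => (2 : ℝ) ^ (-(p : ℤ)) * max |lo1 v| |hi1 v|) x)
    (habs2 : ∀ s : ℝ, |s| ≤ (2 : ℝ) ^ (-(p : ℤ)) →
      s * r2 ∈ evalLF (-((2 : ℝ) ^ (-(p : ℤ)) * max |am2| |ap2|))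
        ((2 : ℝ) ^ (-(p : ℤ)) * max |am2| |ap2|)
        (fun v => -((2 : ℝ) ^ (-(p : ℤ)) * max |lo2 v| |hi2 v|))
        (fun v => (2 : ℝ) ^ (-(p : ℤ)) * max |lo2 v| |hi2 v|) x) :
    R (r1 + r2) ∈ evalLF
      (am1 + am2 + -((2 : ℝ) ^ (-(p : ℤ)) * max |am1| |ap1|) +
        -((2 : ℝ) ^ (-(p : ℤ)) * max |am2| |ap2|) + -mf)
      (ap1 + ap2 + (2 : ℝ) ^ (-(p : ℤ)) * max |am1| |ap1| +
        (2 : ℝ) ^ (-(p : ℤ)) * max |am2| |ap2| + mf)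
      (fun v => lo1 v + lo2 v + -((2 : ℝ) ^ (-(p : ℤ)) * max |lo1 v| |hi1 v|) +
        -((2 : ℝ) ^ (-(p : ℤ)) * max |lo2 v| |hi2 v|))
      (fun v => hi1 v + hi2 v + (2 : ℝ) ^ (-(p : ℤ)) * max |lo1 v| |hi1 v| +
        (2 : ℝ) ^ (-(p : ℤ)) * max |lo2 v| |hi2 v|) x := by
  classical
  set δ : ℝ := (2 : ℝ) ^ (-(p : ℤ)) with hδdef
  have hδ : 0 < δ := by positivity
  set e : ℝ := R (r1 + r2) - (r1 + r2) with hedef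
  set A : ℝ := δ * (|r1| + |r2|) with hAdef
  have hA : 0 ≤ A := by positivity
  set u : ℝ := max (-A) (min A e) with hudef
  have hu : |u| ≤ A := by
    rw [abs_le]
    exact ⟨le_max_left _ _, max_le (by linarith) (min_le_left _ _)⟩
  have hem : |e - u| ≤ mf := by
    have he : |e| ≤ A + mf := hR
    rw [abs_le] at he ⊢
    rcases le_total e A with h1 | h1
    · rcases le_total (-A) e with h2 | h2
      · rw [hudef, min_eq_right h1, max_eq_right h2]
        constructor <;> linarith
      · rw [hudef, min_eq_right h1, max_eq_left h2]
        constructor <;> linarith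
    · rw [hudef, min_eq_left h1, max_eq_right (by linarith : -A ≤ A)]
      constructor <;> linarith
  -- find s1, s2
  obtain ⟨s1, s2, hs1, hs2, hsum⟩ :
      ∃ s1 s2 : ℝ, |s1| ≤ δ ∧ |s2| ≤ δ ∧ s1 * r1 + s2 * r2 = u := by
    by_cases hB : |r1| + |r2| = 0
    · have hr10 : r1 = 0 := by
        have := abs_nonneg r1; have := abs_nonneg r2
        have : |r1| = 0 := by linarith
        exact abs_eq_zero.mp this
      have hr20 : r2 = 0 := by
        have := abs_nonneg r1; have := abs_nonneg r2
        have : |r2| = 0 := by linarith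
        exact abs_eq_zero.mp this
      have hA0 : A = 0 := by rw [hAdef, hB, mul_zero]
      have hu0 : u = 0 := by
        have := hu
        rw [hA0] at this
        exact abs_eq_zero.mp (le_antisymm this (abs_nonneg u))
      exact ⟨0, 0, by simpa using hδ.le, by simpa using hδ.le, by
        rw [hr10, hr20, hu0]; ring⟩
    · have hBpos : 0 < |r1| + |r2| := lt_of_le_of_ne (by positivity) (Ne.symm hB)
      have hApos : 0 < A := by rw [hAdef]; positivity
      refine ⟨u / A * δ * Real.sign r1, u / A * δ * Real.sign r2, ?_, ?_, ?_⟩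
      · have h1 : |u / A| ≤ 1 := by
          rw [abs_div, abs_of_pos hApos, div_le_one hApos]; exact hu
        have hsgn : |Real.sign r1| ≤ 1 := by
          rcases Real.sign_apply_eq r1 with h | h | h <;> rw [h] <;> norm_num
        calc |u / A * δ * Real.sign r1| = |u / A| * δ * |Real.sign r1| := by
              rw [abs_mul, abs_mul, abs_of_pos hδ]
          _ ≤ 1 * δ * 1 := by
              apply mul_le_mul (mul_le_mul h1 le_rfl hδ.le (by norm_num)) hsgn
                (abs_nonneg _) (by positivity)
          _ = δ := by ring
      · have h1 : |u / A| ≤ 1 := by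
          rw [abs_div, abs_of_pos hApos, div_le_one hApos]; exact hu
        have hsgn : |Real.sign r2| ≤ 1 := by
          rcases Real.sign_apply_eq r2 with h | h | h <;> rw [h] <;> norm_num
        calc |u / A * δ * Real.sign r2| = |u / A| * δ * |Real.sign r2| := by
              rw [abs_mul, abs_mul, abs_of_pos hδ]
          _ ≤ 1 * δ * 1 := by
              apply mul_le_mul (mul_le_mul h1 le_rfl hδ.le (by norm_num)) hsgn
                (abs_nonneg _) (by positivity)
          _ = δ := by ring
      · have hsr1 : Real.sign r1 * r1 = |r1| := by
          rcases lt_trichotomy r1 0 with h | h | h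
          · rw [Real.sign_of_neg h, abs_of_neg h]; ring
          · rw [h]; simp
          · rw [Real.sign_of_pos h, abs_of_pos h]; ring
        have hsr2 : Real.sign r2 * r2 = |r2| := by
          rcases lt_trichotomy r2 0 with h | h | h
          · rw [Real.sign_of_neg h, abs_of_neg h]; ring
          · rw [h]; simp
          · rw [Real.sign_of_pos h, abs_of_pos h]; ring
        have : u / A * δ * Real.sign r1 * r1 + u / A * δ * Real.sign r2 * r2
            = u / A * (δ * (|r1| + |r2|)) := by
          rw [mul_assoc (u / A * δ) (Real.sign r1) r1, hsr1,
            mul_assoc (u / A * δ) (Real.sign r2) r2, hsr2]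
          ring
        rw [this, ← hAdef, div_mul_cancel₀ _ hApos.ne']
  obtain ⟨c1, hc1, t1, ht1, he1⟩ := hr1
  obtain ⟨c2, hc2, t2, ht2, he2⟩ := hr2
  obtain ⟨c3, hc3, t3, ht3, he3⟩ := habs1 s1 hs1
  obtain ⟨c4, hc4, t4, ht4, he4⟩ := habs2 s2 hs2
  refine ⟨c1 + c2 + c3 + c4 + (e - u), ?_, fun v => t1 v + t2 v + t3 v + t4 v, ?_, ?_⟩
  · obtain ⟨h1, h1'⟩ := hc1
    obtain ⟨h2, h2'⟩ := hc2
    obtain ⟨h3, h3'⟩ := hc3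
    obtain ⟨h4, h4'⟩ := hc4
    have := abs_le.mp hem
    exact ⟨by linarith [this.1], by linarith [this.2]⟩
  · intro v
    obtain ⟨h1, h1'⟩ := ht1 v
    obtain ⟨h2, h2'⟩ := ht2 v
    obtain ⟨h3, h3'⟩ := ht3 v
    obtain ⟨h4, h4'⟩ := ht4 v
    exact ⟨by simp only at *; linarith, by simp only at *; linarith⟩
  · have hsum' : ∑ v, (t1 v + t2 v + t3 v + t4 v) * x v
        = (∑ v, t1 v * x v) + (∑ v, t2 v * x v) + (∑ v, t3 v * x v) + (∑ v, t4 v * x v) := by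
      rw [← Finset.sum_add_distrib, ← Finset.sum_add_distrib, ← Finset.sum_add_distrib]
      apply Finset.sum_congr rfl
      intro v _
      ring
    have hRval : R (r1 + r2) = r1 + r2 + e := by rw [hedef]; ring
    rw [hsum', hRval, he1, he2]
    have : s1 * r1 + s2 * r2 = u := hsum
    rw [he3, he4] at this
    linarith
end

section
/- Soundness of the octagon test refinement (real-arithmetic core): suppose reals x_i, x_j and real linear-form values s₁, s₂ satisfy s₁ ≤ s₂, where s_k lies in the evaluation of interval linear form l_k at x. Then x_j − x_i ≤ sup of the evaluation of (l₂ ⊟ l₁ ⊟ X_i ⊞ X_j) at x, where X_i, X_j denote the linear forms with coefficient [1,1] on variables i, j respectively, and ⊞/⊟ are componentwise interval addition/subtraction. -/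
open Finset in
lemma evalLF_bddAbove {V : Type*} [Fintype V] (am ap : ℝ) (lo hi : V → ℝ) (x : V → ℝ) :
    BddAbove (evalLF am ap lo hi x) := by
  refine ⟨ap + ∑ v, max (lo v * x v) (hi v * x v), ?_⟩
  rintro r ⟨c, hc, t, ht, rfl⟩
  refine add_le_add hc.2 (Finset.sum_le_sum fun v _ => ?_)
  rcases le_or_gt 0 (x v) with hx | hx
  · exact le_max_of_le_right (mul_le_mul_of_nonneg_right (ht v).2 hx)
  · exact le_max_of_le_left (mul_le_mul_of_nonpos_right (ht v).1 hx.le)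

open Finset in
theorem octagon_test_refinement_sound {V : Type*} [Fintype V] [DecidableEq V]
    (am1 ap1 am2 ap2 : ℝ) (lo1 hi1 lo2 hi2 : V → ℝ) (x : V → ℝ)
    (i j : V) (hij : i ≠ j) (s1 s2 : ℝ)
    (hs1 : s1 ∈ evalLF am1 ap1 lo1 hi1 x)
    (hs2 : s2 ∈ evalLF am2 ap2 lo2 hi2 x)
    (hle : s1 ≤ s2) :
    x j - x i ≤ sSup (evalLF (am2 - ap1) (ap2 - am1)
      (fun v => lo2 v - hi1 v - (if v = i then 1 else 0) + (if v = j then 1 else 0))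
      (fun v => hi2 v - lo1 v - (if v = i then 1 else 0) + (if v = j then 1 else 0))
      x) := by
  obtain ⟨c1, hc1, t1, ht1, rfl⟩ := hs1
  obtain ⟨c2, hc2, t2, ht2, rfl⟩ := hs2
  have hmem : (c2 - c1) + ∑ v, (t2 v - t1 v - (if v = i then 1 else 0)
      + (if v = j then 1 else 0)) * x v ∈ evalLF (am2 - ap1) (ap2 - am1)
      (fun v => lo2 v - hi1 v - (if v = i then 1 else 0) + (if v = j then 1 else 0))
      (fun v => hi2 v - lo1 v - (if v = i then 1 else 0) + (if v = j then 1 else 0)) x := by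
    refine ⟨c2 - c1, ⟨sub_le_sub hc2.1 hc1.2, sub_le_sub hc2.2 hc1.1⟩,
      fun v => t2 v - t1 v - (if v = i then 1 else 0) + (if v = j then 1 else 0),
      fun v => ⟨?_, ?_⟩, rfl⟩
    · exact add_le_add (sub_le_sub (sub_le_sub (ht2 v).1 (ht1 v).2) le_rfl) le_rfl
    · exact add_le_add (sub_le_sub (sub_le_sub (ht2 v).2 (ht1 v).1) le_rfl) le_rfl
  refine le_trans ?_ (le_csSup (evalLF_bddAbove _ _ _ _ _) hmem)
  have hsum : ∑ v, (t2 v - t1 v - (if v = i then 1 else 0)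
      + (if v = j then 1 else 0)) * x v
      = (∑ v, t2 v * x v) - (∑ v, t1 v * x v) - x i + x j := by
    simp only [add_mul, sub_mul, ite_mul, one_mul, zero_mul]
    rw [Finset.sum_add_distrib, Finset.sum_sub_distrib, Finset.sum_sub_distrib,
      Finset.sum_ite_eq' Finset.univ i, Finset.sum_ite_eq' Finset.univ j]
    simp
  rw [hsum]
  linarith
end
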